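/- Let $a, b, r, s > 0$ be real numbers. Then $\int_0^{\infty} e^{-b u}(r + s e^{-u})^{-a-b}\, du \; + \; \int_0^{\infty} e^{-a u}(s + r e^{-u})^{-a-b}\, du \; = \; r^{-a} s^{-b}\, \frac{\Gamma(a)\Gamma(b)}{\Gamma(a+b)}$. -/

import Mathlib

/-!
Substituting `x = exp (-u)` in the first integral and `x = exp u` in the second turns them into
the integrals of `x ^ (b - 1) * (r + s * x) ^ (-a - b)` over `(0, 1)` and over `(1, ∞)`. Their sum
is the integral over `(0, ∞)`, which the substitution `x = (r / s) * t / (1 - t)` turns into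
`r ^ (-a) * s ^ (-b)` times the beta integral `∫₀¹ t ^ (b - 1) * (1 - t) ^ (a - 1)`.
-/

open MeasureTheory Set Real

lemma ofReal_beta_integrand {t : ℝ} (ht : t ∈ Icc (0 : ℝ) 1) (p q : ℝ) :
    ((t ^ (p - 1) * (1 - t) ^ (q - 1) : ℝ) : ℂ)
      = (t : ℂ) ^ ((p : ℂ) - 1) * (1 - (t : ℂ)) ^ ((q : ℂ) - 1) := by
  push_cast [Complex.ofReal_cpow ht.1, Complex.ofReal_cpow (sub_nonneg.mpr ht.2)]
  rfl

section BetaIntegral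

variable {p q : ℝ}

lemma integrableOn_beta_integrand (hp : 0 < p) (hq : 0 < q) :
    IntegrableOn (fun t : ℝ => t ^ (p - 1) * (1 - t) ^ (q - 1)) (Ioo 0 1) := by
  have h := (Complex.betaIntegral_convergent (u := p) (v := q) (by simpa) (by simpa)).1
  rw [integrableOn_Ioc_iff_integrableOn_Ioo] at h
  refine IntegrableOn.congr_fun (Integrable.re h) (fun t ht => ?_) measurableSet_Ioo
  rw [← ofReal_beta_integrand (Ioo_subset_Icc_self ht)]
  exact Complex.ofReal_re _

lemma integral_beta_integrand (hp : 0 < p) (hq : 0 < q) :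
    ∫ t in Ioo 0 1, t ^ (p - 1) * (1 - t) ^ (q - 1) = Gamma p * Gamma q / Gamma (p + q) := by
  have h := Complex.betaIntegral_eq_Gamma_mul_div p q (by simpa) (by simpa)
  rw [Complex.betaIntegral, intervalIntegral.integral_of_le zero_le_one,
    integral_Ioc_eq_integral_Ioo] at h
  apply Complex.ofReal_injective
  rw [← integral_complex_ofReal, setIntegral_congr_fun measurableSet_Ioo
    (fun t ht => ofReal_beta_integrand (Ioo_subset_Icc_self ht) p q), h]
  push_cast [← Complex.ofReal_add, Complex.Gamma_ofReal]
  rfl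

end BetaIntegral

lemma image_div_one_sub_Ioo : (fun t : ℝ => t / (1 - t)) '' Ioo 0 1 = Ioi 0 := by
  ext y
  constructor
  · rintro ⟨t, ⟨ht0, ht1⟩, rfl⟩
    exact div_pos ht0 (sub_pos.mpr ht1)
  · intro (hy : 0 < y)
    refine ⟨y / (1 + y), ⟨by positivity, (div_lt_one (by positivity)).mpr (by linarith)⟩,
      ?_⟩
    field_simp
    ring

lemma injOn_div_one_sub : InjOn (fun t : ℝ => t / (1 - t)) (Iio 1) := by
  intro t (ht : t < 1) u (hu : u < 1) h
  have h1 : 1 - t ≠ 0 := (sub_pos.mpr ht).ne'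
  have h2 : 1 - u ≠ 0 := (sub_pos.mpr hu).ne'
  rw [div_eq_div_iff h1 h2] at h
  linarith

lemma hasDerivAt_div_one_sub {t : ℝ} (ht : t ≠ 1) :
    HasDerivAt (fun t : ℝ => t / (1 - t)) ((1 - t) ^ 2)⁻¹ t := by
  have h1 : 1 - t ≠ 0 := sub_ne_zero.mpr (Ne.symm ht)
  refine ((hasDerivAt_id' t).div ((hasDerivAt_id' t).const_sub 1) h1).congr_deriv ?_
  field_simp
  ring

lemma rpow_div_one_sub_mul_rpow {t : ℝ} (ht : t ∈ Ioo (0 : ℝ) 1) (a b : ℝ) :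
    ((1 - t) ^ 2)⁻¹ * ((t / (1 - t)) ^ (b - 1) * (1 + t / (1 - t)) ^ (-a - b))
      = t ^ (b - 1) * (1 - t) ^ (a - 1) := by
  obtain ⟨ht0, ht1⟩ := ht
  have hu : 0 < 1 - t := sub_pos.mpr ht1
  have h1 : 1 + t / (1 - t) = (1 - t)⁻¹ := by field_simp; ring
  rw [h1, div_rpow ht0.le hu.le, inv_rpow hu.le, ← rpow_neg hu.le, ← rpow_natCast,
    ← rpow_neg hu.le, div_eq_mul_inv, ← rpow_neg hu.le]
  calc _ = t ^ (b - 1) *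
          ((1 - t) ^ (-((2 : ℕ) : ℝ)) * (1 - t) ^ (-(b - 1)) * (1 - t) ^ (-(-a - b))) := by ring
    _ = _ := by
        rw [← rpow_add hu, ← rpow_add hu]
        congr 2
        push_cast
        ring

lemma hasDerivWithinAt_div_one_sub_Ioo :
    ∀ t ∈ Ioo (0 : ℝ) 1,
      HasDerivWithinAt (fun t : ℝ => t / (1 - t)) ((1 - t) ^ 2)⁻¹ (Ioo 0 1) t :=
  fun _ ht => (hasDerivAt_div_one_sub ht.2.ne).hasDerivWithinAt

lemma integral_Ioi_eq_integral_Ioo_comp_div_one_sub (g : ℝ → ℝ) :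
    ∫ y in Ioi 0, g y = ∫ t in Ioo 0 1, ((1 - t) ^ 2)⁻¹ * g (t / (1 - t)) := by
  rw [← image_div_one_sub_Ioo, integral_image_eq_integral_abs_deriv_smul measurableSet_Ioo
    hasDerivWithinAt_div_one_sub_Ioo (injOn_div_one_sub.mono Ioo_subset_Iio_self)]
  simp_rw [smul_eq_mul, abs_inv, abs_sq]

lemma integrableOn_Ioi_iff_integrableOn_Ioo_comp_div_one_sub (g : ℝ → ℝ) :
    IntegrableOn g (Ioi 0) ↔
      IntegrableOn (fun t => ((1 - t) ^ 2)⁻¹ * g (t / (1 - t))) (Ioo 0 1) := by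
  rw [← image_div_one_sub_Ioo,
    integrableOn_image_iff_integrableOn_abs_deriv_smul measurableSet_Ioo
      hasDerivWithinAt_div_one_sub_Ioo (injOn_div_one_sub.mono Ioo_subset_Iio_self)]
  simp_rw [smul_eq_mul, abs_inv, abs_sq]

lemma div_mul_rpow_mul_add_rpow {r s y : ℝ} (hr : 0 < r) (hs : 0 < s) (hy : 0 < y) (a b : ℝ) :
    r / s * ((r / s * y) ^ (b - 1) * (r + s * (r / s * y)) ^ (-a - b))
      = r ^ (-a) * s ^ (-b) * (y ^ (b - 1) * (1 + y) ^ (-a - b)) := by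
  have h1 : r + s * (r / s * y) = r * (1 + y) := by field_simp
  rw [h1, mul_rpow (by positivity) hy.le, mul_rpow hr.le (by positivity),
    rpow_sub_one (by positivity), div_rpow hr.le hs.le, rpow_sub hr, rpow_neg hs.le]
  field_simp

section HalfLine

variable {a b r s : ℝ}

lemma integrableOn_Ioi_rpow_mul_one_add_rpow (ha : 0 < a) (hb : 0 < b) :
    IntegrableOn (fun y : ℝ => y ^ (b - 1) * (1 + y) ^ (-a - b)) (Ioi 0) := by
  rw [integrableOn_Ioi_iff_integrableOn_Ioo_comp_div_one_sub]
  exact (integrableOn_beta_integrand hb ha).congr_fun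
    (fun t ht => (rpow_div_one_sub_mul_rpow ht a b).symm) measurableSet_Ioo

lemma integral_Ioi_rpow_mul_one_add_rpow (ha : 0 < a) (hb : 0 < b) :
    ∫ y in Ioi 0, y ^ (b - 1) * (1 + y) ^ (-a - b) = Gamma a * Gamma b / Gamma (a + b) := by
  rw [integral_Ioi_eq_integral_Ioo_comp_div_one_sub,
    setIntegral_congr_fun measurableSet_Ioo (fun t ht => rpow_div_one_sub_mul_rpow ht a b),
    integral_beta_integrand hb ha, mul_comm, add_comm]

lemma integrableOn_Ioi_rpow_mul_add_rpow (ha : 0 < a) (hb : 0 < b) (hr : 0 < r) (hs : 0 < s) :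
    IntegrableOn (fun x : ℝ => x ^ (b - 1) * (r + s * x) ^ (-a - b)) (Ioi 0) := by
  have hc : 0 < r / s := div_pos hr hs
  rw [← mul_zero (r / s), ← integrableOn_Ioi_comp_mul_left_iff _ _ hc, IntegrableOn,
    ← integrable_smul_iff hc.ne']
  exact IntegrableOn.congr_fun
    ((integrableOn_Ioi_rpow_mul_one_add_rpow ha hb).const_mul (r ^ (-a) * s ^ (-b)))
    (fun y hy => (div_mul_rpow_mul_add_rpow hr hs hy a b).symm) measurableSet_Ioi

lemma integral_Ioi_rpow_mul_add_rpow (ha : 0 < a) (hb : 0 < b) (hr : 0 < r) (hs : 0 < s) :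
    ∫ x in Ioi 0, x ^ (b - 1) * (r + s * x) ^ (-a - b)
      = r ^ (-a) * s ^ (-b) * (Gamma a * Gamma b / Gamma (a + b)) := by
  have hc : 0 < r / s := div_pos hr hs
  rw [← mul_zero (r / s), ← integral_comp_mul_left_Ioi' _ _ hc, smul_eq_mul,
    ← integral_const_mul,
    setIntegral_congr_fun measurableSet_Ioi (fun y hy => div_mul_rpow_mul_add_rpow hr hs hy a b),
    integral_const_mul, integral_Ioi_rpow_mul_one_add_rpow ha hb]

end HalfLine

lemma integral_comp_exp_Iio {E : Type*} [NormedAddCommGroup E] [NormedSpace ℝ E]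
    (g : ℝ → E) (a : ℝ) :
    ∫ x in Iio a, exp x • g (exp x) = ∫ y in Ioo 0 (exp a), g y := by
  rw [← image_exp_Iio, integral_image_eq_integral_abs_deriv_smul measurableSet_Iio
    (fun x _ => (hasDerivAt_exp x).hasDerivWithinAt) exp_injective.injOn]
  simp_rw [abs_of_pos (exp_pos _)]

lemma exp_mul_eq_exp_mul_exp_rpow_sub_one (b v : ℝ) : exp (b * v) = exp v * exp v ^ (b - 1) := by
  rw [← exp_mul, ← exp_add]
  ring_nf

lemma integral_Ioi_exp_neg_mul_comp (b : ℝ) (f : ℝ → ℝ) :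
    ∫ u in Ioi 0, exp (-b * u) * f (exp (-u)) = ∫ x in Ioo 0 1, x ^ (b - 1) * f x := by
  have h := integral_comp_neg_Ioi 0 (fun v => exp (b * v) * f (exp v))
  simp only [mul_neg, neg_zero, ← neg_mul] at h
  have h' := integral_comp_exp_Iio (fun x => x ^ (b - 1) * f x) 0
  rw [exp_zero] at h'
  rw [h, integral_Iic_eq_integral_Iio, ← h']
  simp_rw [exp_mul_eq_exp_mul_exp_rpow_sub_one b, smul_eq_mul, mul_assoc]

lemma integral_Ioi_exp_mul_comp (b : ℝ) (f : ℝ → ℝ) :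
    ∫ u in Ioi 0, exp (b * u) * f (exp u) = ∫ x in Ioi 1, x ^ (b - 1) * f x := by
  have h := integral_comp_exp_Ioi (fun x => x ^ (b - 1) * f x) 0
  rw [exp_zero] at h
  rw [← h]
  simp_rw [exp_mul_eq_exp_mul_exp_rpow_sub_one b, smul_eq_mul, mul_assoc]

lemma exp_neg_mul_mul_add_exp_neg_rpow {r s : ℝ} (hr : 0 ≤ r) (hs : 0 ≤ s) (a b u : ℝ) :
    exp (-a * u) * (s + r * exp (-u)) ^ (-a - b) = exp (b * u) * (r + s * exp u) ^ (-a - b) := by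
  have h : s + r * exp (-u) = exp (-u) * (r + s * exp u) := by
    rw [mul_add, mul_left_comm, ← exp_add, neg_add_cancel, exp_zero]
    ring
  rw [h, mul_rpow (exp_pos _).le (by positivity), ← exp_mul, ← mul_assoc, ← exp_add]
  ring_nf

lemma integral_Ioo_add_integral_Ioi {f : ℝ → ℝ} {a b : ℝ} (hf : IntegrableOn f (Ioi a))
    (hab : a ≤ b) :
    (∫ x in Ioo a b, f x) + ∫ x in Ioi b, f x = ∫ x in Ioi a, f x := by
  rw [← integral_Ioc_eq_integral_Ioo, ← intervalIntegral.integral_of_le hab,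
    intervalIntegral.integral_interval_add_Ioi hf (hf.mono_set (Ioi_subset_Ioi hab))]

/-- Splitting the beta integral over the two charts of the tropical projective line. -/
theorem beta_integral_two_charts (a b r s : ℝ) (ha : 0 < a) (hb : 0 < b)
    (hr : 0 < r) (hs : 0 < s) :
    (∫ u in Set.Ioi (0 : ℝ), Real.exp (-b * u) * (r + s * Real.exp (-u)) ^ (-a - b))
      + (∫ u in Set.Ioi (0 : ℝ), Real.exp (-a * u) * (s + r * Real.exp (-u)) ^ (-a - b))
      = r ^ (-a) * s ^ (-b) * (Real.Gamma a * Real.Gamma b / Real.Gamma (a + b)) := by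
  have h_lower : ∫ u in Ioi 0, exp (-b * u) * (r + s * exp (-u)) ^ (-a - b)
      = ∫ x in Ioo 0 1, x ^ (b - 1) * (r + s * x) ^ (-a - b) :=
    integral_Ioi_exp_neg_mul_comp b fun x => (r + s * x) ^ (-a - b)
  have h_upper : ∫ u in Ioi 0, exp (-a * u) * (s + r * exp (-u)) ^ (-a - b)
      = ∫ x in Ioi 1, x ^ (b - 1) * (r + s * x) ^ (-a - b) := by
    simp_rw [exp_neg_mul_mul_add_exp_neg_rpow hr.le hs.le a b]
    exact integral_Ioi_exp_mul_comp b fun x => (r + s * x) ^ (-a - b)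
  rw [h_lower, h_upper,
    integral_Ioo_add_integral_Ioi (integrableOn_Ioi_rpow_mul_add_rpow ha hb hr hs) zero_le_one,
    integral_Ioi_rpow_mul_add_rpow ha hb hr hs]
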